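/- arXiv:2602.19893 — 2 statements merged into one kernel-verified Lean document; each statement's English description precedes it below -/
import Mathlib

section
/- For every integer k ≥ 1, the second-order coefficient of the equal-truncation generalized Hessian operator equals 1: (1/2)[2 ∑_{m=1}^k (-1)^{2-m} (∑_{j=1}^k 1/j) C(k,m) m + ∑_{l=1}^k ∑_{m=1}^k (-1)^{2-l-m} C(k,l) C(k,m) (l+m)^2/(l·m)] = 1. -/
/-!
Write `a m = (-1)^m C(k,m)`. Since `(l + m)^2 / (l m) = l/m + m/l + 2`, the double sum equals
`2 (∑ a m · m)(∑ a m / m) + 2 (∑ a m)^2`. The classical identity `∑ a m / m = -H_k` makes the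
first product cancel the term `2 H_k ∑ a m · m`, whatever its value, and `∑_{m ≥ 1} a m = -1`
(the binomial expansion of `(1 - 1)^k`) leaves `2 · 1 / 2 = 1`.
-/

open Finset

theorem neg_one_zpow_two_sub {α : Type*} [DivisionRing α] (n : ℤ) :
    (-1 : α) ^ (2 - n) = (-1) ^ n := by
  rw [zpow_sub₀ (by norm_num), zpow_ofNat, neg_one_sq, one_div, ← zpow_neg, ← inv_zpow',
    inv_neg_one]

theorem sum_Icc_neg_one_pow_mul_choose {R : Type*} [CommRing R] {k : ℕ} (hk : k ≠ 0) :
    ∑ m ∈ Icc 1 k, (-1 : R) ^ m * k.choose m = -1 := by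
  have h := add_pow (-1 : R) 1 k
  rw [neg_add_cancel, zero_pow hk, range_eq_Ico, sum_eq_sum_Ico_succ_bot (by omega : 0 < k + 1),
    zero_add, Ico_add_one_right_eq_Icc] at h
  simp only [one_pow, mul_one, pow_zero, Nat.choose_zero_right, Nat.cast_one] at h
  linear_combination -h

/-- Pascal's rule followed by absorption, `C(n, m - 1) / m = C(n + 1, m) / (n + 1)`. -/
theorem choose_succ_div_eq (n : ℕ) {m : ℕ} (hm : m ≠ 0) :
    ((n + 1).choose m : ℚ) / m = n.choose m / m + (n + 1).choose m / (n + 1) := by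
  obtain ⟨j, rfl⟩ := Nat.exists_eq_succ_of_ne_zero hm
  have h := congrArg (Nat.cast (R := ℚ)) (Nat.add_one_mul_choose_eq n j)
  rw [Nat.choose_succ_succ'] at h ⊢
  push_cast at h ⊢
  field_simp
  linear_combination h

theorem sum_Icc_neg_one_pow_mul_choose_div (k : ℕ) :
    ∑ m ∈ Icc 1 k, (-1 : ℚ) ^ m * k.choose m / m = -harmonic k := by
  induction k with
  | zero => simp
  | succ n ih =>
    have hsplit : ∑ m ∈ Icc 1 (n + 1), (-1 : ℚ) ^ m * (n + 1).choose m / m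
        = ∑ m ∈ Icc 1 (n + 1), (-1 : ℚ) ^ m * n.choose m / m
          + (∑ m ∈ Icc 1 (n + 1), (-1 : ℚ) ^ m * (n + 1).choose m) / (n + 1) := by
      rw [sum_div, ← sum_add_distrib]
      refine sum_congr rfl fun m hm => ?_
      rw [mul_div_assoc, mul_div_assoc, mul_div_assoc, ← mul_add, choose_succ_div_eq n (by grind)]
    rw [hsplit, sum_Icc_succ_top (by omega), Nat.choose_succ_self, ih,
      sum_Icc_neg_one_pow_mul_choose n.succ_ne_zero, harmonic_succ]
    push_cast
    ring

theorem sum_sum_mul_mul_add_sq_div_mul {ι K : Type*} [Field K] (s : Finset ι) (a x : ι → K)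
    (hx : ∀ i ∈ s, x i ≠ 0) :
    ∑ i ∈ s, ∑ j ∈ s, a i * a j * (x i + x j) ^ 2 / (x i * x j)
      = 2 * ((∑ i ∈ s, a i * x i) * ∑ j ∈ s, a j / x j) + 2 * (∑ i ∈ s, a i) ^ 2 := by
  have hterm : ∀ i ∈ s, ∀ j ∈ s, a i * a j * (x i + x j) ^ 2 / (x i * x j)
      = a i * x i * (a j / x j) + a j * x j * (a i / x i) + 2 * (a i * a j) := by
    intro i hi j hj
    field_simp [hx i hi, hx j hj]
    ring
  rw [sum_congr rfl fun i hi => sum_congr rfl (hterm i hi)]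
  simp only [sum_add_distrib, ← mul_sum, ← sum_mul]
  ring

theorem stmt5 (k : ℕ) (hk : 1 ≤ k) :
    (1 / 2 : ℚ) *
      (2 * ∑ m ∈ Finset.Icc 1 k, (-1 : ℚ) ^ ((2 : ℤ) - (m : ℤ))
          * (∑ j ∈ Finset.Icc 1 k, (1 : ℚ) / (j : ℚ)) * (k.choose m : ℚ) * (m : ℚ)
        + ∑ l ∈ Finset.Icc 1 k, ∑ m ∈ Finset.Icc 1 k,
            (-1 : ℚ) ^ ((2 : ℤ) - (l : ℤ) - (m : ℤ))
              * (k.choose l : ℚ) * (k.choose m : ℚ)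
              * ((l : ℚ) + (m : ℚ)) ^ 2 / ((l : ℚ) * (m : ℚ))) = 1 := by
  have hfirst : ∑ m ∈ Icc 1 k, (-1 : ℚ) ^ ((2 : ℤ) - (m : ℤ))
      * (∑ j ∈ Icc 1 k, (1 : ℚ) / (j : ℚ)) * (k.choose m : ℚ) * (m : ℚ)
      = harmonic k * ∑ m ∈ Icc 1 k, (-1 : ℚ) ^ m * k.choose m * m := by
    rw [harmonic_eq_sum_Icc, mul_sum]
    refine sum_congr rfl fun m _ => ?_
    rw [neg_one_zpow_two_sub, zpow_natCast]
    simp only [one_div]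
    ring
  have hsecond : ∑ l ∈ Icc 1 k, ∑ m ∈ Icc 1 k, (-1 : ℚ) ^ ((2 : ℤ) - (l : ℤ) - (m : ℤ))
      * (k.choose l : ℚ) * (k.choose m : ℚ) * ((l : ℚ) + (m : ℚ)) ^ 2 / ((l : ℚ) * (m : ℚ))
      = ∑ l ∈ Icc 1 k, ∑ m ∈ Icc 1 k, (-1 : ℚ) ^ l * k.choose l * ((-1 : ℚ) ^ m * k.choose m)
          * ((l : ℚ) + m) ^ 2 / (l * m) := by
    refine sum_congr rfl fun l _ => sum_congr rfl fun m _ => ?_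
    rw [show (2 : ℤ) - l - m = 2 - ((l + m : ℕ) : ℤ) by push_cast; ring, neg_one_zpow_two_sub,
      zpow_natCast, pow_add]
    ring
  rw [hfirst, hsecond, sum_sum_mul_mul_add_sq_div_mul (Icc 1 k) (fun m => (-1 : ℚ) ^ m * k.choose m)
    Nat.cast fun m hm => Nat.cast_ne_zero.mpr (by grind)]
  rw [sum_Icc_neg_one_pow_mul_choose_div, sum_Icc_neg_one_pow_mul_choose (by omega)]
  ring
end

section
/- For integers k₁, k₂ ≥ 1 and q with 3 ≤ q ≤ min(k₁,k₂), the q-th order coefficient of the unequal-truncation Hessian operator vanishes: c_0^{k₂} ∑_{m=1}^{k₁} (-1)^{2-m} C(k₁,m) m^{q-1} + c_0^{k₁} ∑_{l=1}^{k₂} (-1)^{2-l} C(k₂,l) l^{q-1} + ∑_{l=1}^{k₂} ∑_{m=1}^{k₁} (-1)^{2-l-m} C(k₂,l) C(k₁,m) (l+m)^q/(l·m) = 0, where c_0^k = ∑_{j=1}^k 1/j. -/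
/-!
For `0 < j < n` the alternating moment `∑_{k=1}^n (-1)^k C(n,k) k^j` vanishes, being the `n`-th
forward difference of `x ↦ x^j` at `0` (up to sign). This kills both single sums (`j = q - 1`).
In the double sum, expanding `(l + m)^q` binomially splits each term `C(q,i) l^(i-1) m^(q-i-1)`
into a product of an `l`-moment and an `m`-moment; since `q ≥ 3`, for every `i` one of the
exponents `i - 1`, `q - i - 1` lies in `[1, q - 1]`, so one factor is zero.
-/

open Finset

section AlternatingMoments

variable {R : Type*} [CommRing R]

theorem sum_range_neg_one_pow_mul_choose_mul_pow_eq_zero {n j : ℕ} (h : j < n) :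
    ∑ k ∈ range (n + 1), (-1 : R) ^ k * n.choose k * (k : R) ^ j = 0 := by
  have hΔ := congr_fun (fwdDiff_iter_pow_eq_zero_of_lt (R := R) h) 0
  rw [fwdDiff_iter_eq_sum_shift] at hΔ
  simp only [zero_add, nsmul_eq_mul, mul_one, zsmul_eq_mul, Int.cast_mul, Int.cast_pow,
    Int.cast_neg, Int.cast_one, Int.cast_natCast, Pi.zero_apply] at hΔ
  have hsign : ∀ k ≤ n, (-1 : R) ^ k = (-1) ^ n * (-1) ^ (n - k) := by
    intro k hk
    obtain ⟨d, rfl⟩ := Nat.exists_eq_add_of_le hk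
    rw [Nat.add_sub_cancel_left, pow_add, mul_assoc, ← pow_add, (Even.add_self d).neg_one_pow,
      mul_one]
  calc ∑ k ∈ range (n + 1), (-1 : R) ^ k * n.choose k * (k : R) ^ j
      = (-1) ^ n * ∑ k ∈ range (n + 1), (-1) ^ (n - k) * n.choose k * (k : R) ^ j := by
        rw [mul_sum]
        refine sum_congr rfl fun k hk => ?_
        rw [hsign k (mem_range_succ_iff.mp hk)]
        ring
    _ = 0 := by rw [hΔ, mul_zero]

theorem sum_Icc_neg_one_pow_mul_choose_mul_pow_eq_zero {n j : ℕ} (hj : 0 < j) (h : j < n) :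
    ∑ k ∈ Icc 1 n, (-1 : R) ^ k * n.choose k * (k : R) ^ j = 0 := by
  rw [← sum_range_neg_one_pow_mul_choose_mul_pow_eq_zero h, range_eq_Ico,
    sum_eq_sum_Ico_succ_bot (Nat.succ_pos n)]
  simp [zero_pow hj.ne', Ico_add_one_right_eq_Icc]

end AlternatingMoments

theorem neg_one_zpow_sub_natCast {K : Type*} [DivisionRing K] (a : ℤ) (n : ℕ) :
    (-1 : K) ^ (a - n) = (-1) ^ a * (-1) ^ n := by
  rw [zpow_sub₀ (neg_ne_zero.mpr one_ne_zero), zpow_natCast, div_eq_mul_inv, ← inv_pow,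
    inv_neg_one]

section Field

variable {K : Type*} [Field K] [CharZero K]

theorem sum_Icc_neg_one_pow_mul_choose_mul_pow_div_eq_zero {n j : ℕ} (hj : 2 ≤ j)
    (h : j ≤ n) : ∑ k ∈ Icc 1 n, (-1 : K) ^ k * n.choose k * (k : K) ^ j / k = 0 := by
  rw [← sum_Icc_neg_one_pow_mul_choose_mul_pow_eq_zero (R := K) (n := n) (j := j - 1) (by omega)
    (by omega)]
  refine sum_congr rfl fun k hk => ?_
  have hk0 : (k : K) ≠ 0 := Nat.cast_ne_zero.mpr (by grind)
  rw [mul_div_assoc, ← pow_sub_one_mul (by omega : j ≠ 0) (k : K), mul_div_cancel_right₀ _ hk0]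

theorem sum_Icc_sum_Icc_neg_one_pow_mul_choose_mul_add_pow_div_mul_eq_zero {n₁ n₂ q : ℕ}
    (hq : 3 ≤ q) (hq₁ : q ≤ n₁) (hq₂ : q ≤ n₂) :
    ∑ l ∈ Icc 1 n₂, ∑ m ∈ Icc 1 n₁, (-1 : K) ^ l * (-1) ^ m * n₂.choose l * n₁.choose m
      * ((l : K) + m) ^ q / (l * m) = 0 := by
  set A : ℕ → K := fun i => ∑ l ∈ Icc 1 n₂, (-1 : K) ^ l * n₂.choose l * (l : K) ^ i / l
  set B : ℕ → K := fun i => ∑ m ∈ Icc 1 n₁, (-1 : K) ^ m * n₁.choose m * (m : K) ^ i / m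
  calc _ = ∑ l ∈ Icc 1 n₂, ∑ m ∈ Icc 1 n₁, ∑ i ∈ range (q + 1), (q.choose i : K) *
          (((-1) ^ l * n₂.choose l * (l : K) ^ i / l) *
            ((-1) ^ m * n₁.choose m * (m : K) ^ (q - i) / m)) := by
        refine sum_congr rfl fun l _ => sum_congr rfl fun m _ => ?_
        rw [add_pow, mul_sum, sum_div]
        refine sum_congr rfl fun i _ => ?_
        ring
    _ = ∑ i ∈ range (q + 1), q.choose i * (A i * B (q - i)) := by
        simp only [A, B, sum_mul_sum]
        simp only [mul_sum]
        exact (sum_congr rfl fun l _ => sum_comm).trans sum_comm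
    _ = 0 := by
        refine sum_eq_zero fun i hi => ?_
        have hiq : i ≤ q := mem_range_succ_iff.mp hi
        rcases le_or_gt i (q - 2) with hi | hi
        · rw [show B (q - i) = 0 from
            sum_Icc_neg_one_pow_mul_choose_mul_pow_div_eq_zero (by omega) (by omega), mul_zero,
            mul_zero]
        · rw [show A i = 0 from
            sum_Icc_neg_one_pow_mul_choose_mul_pow_div_eq_zero (by omega) (by omega), zero_mul,
            mul_zero]

end Field

theorem stmt13_general (k₁ k₂ q : ℕ)
    (hq : 3 ≤ q) (hqk : q ≤ min k₁ k₂) :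
    (∑ j ∈ Finset.Icc 1 k₂, (1 : ℚ) / (j : ℚ))
        * ∑ m ∈ Finset.Icc 1 k₁,
            (-1 : ℚ) ^ ((2 : ℤ) - (m : ℤ)) * (k₁.choose m : ℚ) * (m : ℚ) ^ (q - 1)
      + (∑ j ∈ Finset.Icc 1 k₁, (1 : ℚ) / (j : ℚ))
          * ∑ l ∈ Finset.Icc 1 k₂,
              (-1 : ℚ) ^ ((2 : ℤ) - (l : ℤ)) * (k₂.choose l : ℚ) * (l : ℚ) ^ (q - 1)
      + ∑ l ∈ Finset.Icc 1 k₂, ∑ m ∈ Finset.Icc 1 k₁,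
          (-1 : ℚ) ^ ((2 : ℤ) - (l : ℤ) - (m : ℤ))
            * (k₂.choose l : ℚ) * (k₁.choose m : ℚ)
            * ((l : ℚ) + (m : ℚ)) ^ q / ((l : ℚ) * (m : ℚ)) = 0 := by
  have hq₁ : q ≤ k₁ := hqk.trans (min_le_left _ _)
  have hq₂ : q ≤ k₂ := hqk.trans (min_le_right _ _)
  simp only [neg_one_zpow_sub_natCast, even_two.neg_one_zpow, one_mul]
  rw [sum_Icc_neg_one_pow_mul_choose_mul_pow_eq_zero (by omega) (by omega),
    sum_Icc_neg_one_pow_mul_choose_mul_pow_eq_zero (by omega) (by omega),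
    sum_Icc_sum_Icc_neg_one_pow_mul_choose_mul_add_pow_div_mul_eq_zero hq hq₁ hq₂]
  simp

theorem stmt13 (k₁ k₂ q : ℕ) (hk₁ : 1 ≤ k₁) (hk₂ : 1 ≤ k₂)
    (hq : 3 ≤ q) (hqk : q ≤ min k₁ k₂) :
    (∑ j ∈ Finset.Icc 1 k₂, (1 : ℚ) / (j : ℚ))
        * ∑ m ∈ Finset.Icc 1 k₁,
            (-1 : ℚ) ^ ((2 : ℤ) - (m : ℤ)) * (k₁.choose m : ℚ) * (m : ℚ) ^ (q - 1)
      + (∑ j ∈ Finset.Icc 1 k₁, (1 : ℚ) / (j : ℚ))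
          * ∑ l ∈ Finset.Icc 1 k₂,
              (-1 : ℚ) ^ ((2 : ℤ) - (l : ℤ)) * (k₂.choose l : ℚ) * (l : ℚ) ^ (q - 1)
      + ∑ l ∈ Finset.Icc 1 k₂, ∑ m ∈ Finset.Icc 1 k₁,
          (-1 : ℚ) ^ ((2 : ℤ) - (l : ℤ) - (m : ℤ))
            * (k₂.choose l : ℚ) * (k₁.choose m : ℚ)
            * ((l : ℚ) + (m : ℚ)) ^ q / ((l : ℚ) * (m : ℚ)) = 0 :=
  stmt13_general k₁ k₂ q hq hqk
end
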